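/- The bivariate generating function F(z,u) of Otter trees by symmetrical nodes satisfies F(z,u) = 1 − √(1 − 2z − (2u−1) F(z², u²)) as formal power series, where √ denotes the formal power-series square root with constant term 1. -/

import Mathlib

open scoped Classical

/-- Plane binary trees: every node has outdegree 0 or 2. -/
inductive BT where
  | leaf : BT
  | node : BT → BT → BT

/-- Isomorphism of rooted binary trees with *unordered* children. -/
inductive Iso : BT → BT → Prop
  | leaf : Iso .leaf .leaf
  | node {a b c d} : Iso a c → Iso b d → Iso (.node a b) (.node c d)
  | swap {a b c d} : Iso a d → Iso b c → Iso (.node a b) (.node c d)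

theorem Iso.rfl : ∀ t, Iso t t
  | .leaf => .leaf
  | .node l r => .node (Iso.rfl l) (Iso.rfl r)

theorem Iso.symm' {a b : BT} (h : Iso a b) : Iso b a := by
  induction h with
  | leaf => exact .leaf
  | node h1 h2 ih1 ih2 => exact .node ih1 ih2
  | swap h1 h2 ih1 ih2 => exact .swap ih2 ih1

theorem Iso.trans' : ∀ {a b c : BT}, Iso a b → Iso b c → Iso a c := by
  intro a b c h1
  induction h1 generalizing c with
  | leaf => exact fun h2 => h2
  | node g1 g2 ih1 ih2 =>
      intro h2
      cases h2 with
      | node k1 k2 => exact .node (ih1 k1) (ih2 k2)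
      | swap k1 k2 => exact .swap (ih1 k1) (ih2 k2)
  | swap g1 g2 ih1 ih2 =>
      intro h2
      cases h2 with
      | node k1 k2 => exact .swap (ih1 k2) (ih2 k1)
      | swap k1 k2 => exact .node (ih1 k2) (ih2 k1)

instance btSetoid : Setoid BT :=
  ⟨Iso, ⟨Iso.rfl, Iso.symm', Iso.trans'⟩⟩

/-- Otter trees: isomorphism classes of unordered rooted binary trees. -/
def Otter : Type := Quotient btSetoid

/-- Number of leaves. -/
def leavesBT : BT → ℕ
  | .leaf => 1
  | .node l r => leavesBT l + leavesBT r

/-- Number of internal (binary) nodes. -/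
def internalsBT : BT → ℕ
  | .leaf => 0
  | .node l r => internalsBT l + internalsBT r + 1

/-- Number of symmetrical nodes: internal nodes whose two subtrees are isomorphic. -/
noncomputable def symBT : BT → ℕ
  | .leaf => 0
  | .node l r => symBT l + symBT r + (if Iso l r then 1 else 0)

theorem leaves_iso {a b : BT} (h : Iso a b) : leavesBT a = leavesBT b := by
  induction h with
  | leaf => rfl
  | node h1 h2 ih1 ih2 => simp [leavesBT, ih1, ih2]
  | swap h1 h2 ih1 ih2 => simp [leavesBT, ih1, ih2]; omega

theorem internals_iso {a b : BT} (h : Iso a b) : internalsBT a = internalsBT b := by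
  induction h with
  | leaf => rfl
  | node h1 h2 ih1 ih2 => simp [internalsBT, ih1, ih2]
  | swap h1 h2 ih1 ih2 => simp [internalsBT, ih1, ih2]; omega

theorem sym_iso {a b : BT} (h : Iso a b) : symBT a = symBT b := by
  induction h with
  | leaf => rfl
  | @node a b c d h1 h2 ih1 ih2 =>
      have hiff : Iso a b ↔ Iso c d :=
        ⟨fun hab => (h1.symm'.trans' hab).trans' h2,
         fun hcd => (h1.trans' hcd).trans' h2.symm'⟩
      simp only [symBT, ih1, ih2, if_congr hiff rfl rfl]
  | @swap a b c d h1 h2 ih1 ih2 =>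
      have hiff : Iso a b ↔ Iso c d :=
        ⟨fun hab => (h2.symm'.trans' hab.symm').trans' h1,
         fun hcd => (h1.trans' hcd.symm').trans' h2.symm'⟩
      simp only [symBT, ih1, ih2, if_congr hiff rfl rfl]
      omega

def Otter.leaves : Otter → ℕ := Quotient.lift leavesBT fun _ _ h => leaves_iso h
def Otter.internals : Otter → ℕ := Quotient.lift internalsBT fun _ _ h => internals_iso h
noncomputable def Otter.sym : Otter → ℕ := Quotient.lift symBT fun _ _ h => sym_iso h

/-- The set (as a type) of Otter trees with `n` leaves. -/
def OtterN (n : ℕ) : Type := {q : Otter // q.leaves = n}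

/-- Wedderburn–Etherington numbers: number of Otter trees with `n` leaves. -/
noncomputable def WE (n : ℕ) : ℕ := Nat.card (OtterN n)

/-- Binary trees with labeled leaves. -/
inductive LBT where
  | leaf : ℕ → LBT
  | node : LBT → LBT → LBT

/-- Label-preserving isomorphism with unordered children. -/
inductive LIso : LBT → LBT → Prop
  | leaf (k : ℕ) : LIso (.leaf k) (.leaf k)
  | node {a b c d} : LIso a c → LIso b d → LIso (.node a b) (.node c d)
  | swap {a b c d} : LIso a d → LIso b c → LIso (.node a b) (.node c d)

theorem LIso.rfl : ∀ t, LIso t t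
  | .leaf k => .leaf k
  | .node l r => .node (LIso.rfl l) (LIso.rfl r)

theorem LIso.symm' {a b : LBT} (h : LIso a b) : LIso b a := by
  induction h with
  | leaf k => exact .leaf k
  | node h1 h2 ih1 ih2 => exact .node ih1 ih2
  | swap h1 h2 ih1 ih2 => exact .swap ih2 ih1

theorem LIso.trans' : ∀ {a b c : LBT}, LIso a b → LIso b c → LIso a c := by
  intro a b c h1
  induction h1 generalizing c with
  | leaf k => exact fun h2 => h2
  | node g1 g2 ih1 ih2 =>
      intro h2
      cases h2 with
      | node k1 k2 => exact .node (ih1 k1) (ih2 k2)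
      | swap k1 k2 => exact .swap (ih1 k1) (ih2 k2)
  | swap g1 g2 ih1 ih2 =>
      intro h2
      cases h2 with
      | node k1 k2 => exact .swap (ih1 k2) (ih2 k1)
      | swap k1 k2 => exact .node (ih1 k2) (ih2 k1)

instance ltSetoid : Setoid LBT :=
  ⟨LIso, ⟨LIso.rfl, LIso.symm', LIso.trans'⟩⟩

/-- Labeled (phylogenetic-type) trees up to label-preserving isomorphism. -/
def LTree : Type := Quotient ltSetoid

/-- The multiset of leaf labels. -/
def labelsLT : LBT → Multiset ℕ
  | .leaf k => {k}
  | .node l r => labelsLT l + labelsLT r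

/-- The underlying unlabeled shape of a labeled tree. -/
def shapeLT : LBT → BT
  | .leaf _ => .leaf
  | .node l r => .node (shapeLT l) (shapeLT r)

theorem labels_iso {a b : LBT} (h : LIso a b) : labelsLT a = labelsLT b := by
  induction h with
  | leaf k => rfl
  | node h1 h2 ih1 ih2 => simp [labelsLT, ih1, ih2]
  | swap h1 h2 ih1 ih2 => simp [labelsLT, ih1, ih2]; exact add_comm _ _

theorem shape_iso {a b : LBT} (h : LIso a b) : Iso (shapeLT a) (shapeLT b) := by
  induction h with
  | leaf k => exact .leaf
  | node h1 h2 ih1 ih2 => exact .node ih1 ih2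
  | swap h1 h2 ih1 ih2 => exact .swap ih1 ih2

def LTree.labels : LTree → Multiset ℕ := Quotient.lift labelsLT fun _ _ h => labels_iso h

def LTree.shape : LTree → Otter :=
  Quotient.lift (fun t => (⟦shapeLT t⟧ : Otter)) fun _ _ h => Quotient.sound (shape_iso h)

/-- Phylogenetic trees of size `n`: labeled trees whose leaf labels are exactly `1, …, n`. -/
def Phylo (n : ℕ) : Type := {q : LTree // q.labels = (Finset.Icc 1 n).val}

/-- The number of phylogenetic trees of size `n`. -/
noncomputable def phyloCount (n : ℕ) : ℕ := Nat.card (Phylo n)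

/-- The double factorial `n!! = n·(n-2)·(n-4)···`. -/
def doubleFac : ℕ → ℕ
  | 0 => 1
  | 1 => 1
  | (n+2) => (n+2) * doubleFac n

/-- The probability that two independent uniformly random phylogenetic trees of
size `n` are isomorphic (have the same shape). -/
noncomputable def pIso (n : ℕ) : ℚ :=
  (Nat.card {pp : Phylo n × Phylo n // pp.1.1.shape = pp.2.1.shape} : ℚ)
    / (Nat.card (Phylo n) : ℚ) ^ 2

/-- The bivariate generating function `F(z,u) = Σ_t u^{sym t} z^{|t|}` of Otter
trees, as a power series in `z` with coefficients in `ℚ[u]`. -/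
noncomputable def Fgen : PowerSeries (Polynomial ℚ) :=
  PowerSeries.mk fun n => ∑ᶠ t : OtterN n, (Polynomial.X : Polynomial ℚ) ^ t.1.sym

/-- The substituted series `F(z², u²)`. -/
noncomputable def Fgen2 : PowerSeries (Polynomial ℚ) :=
  PowerSeries.mk fun n =>
    if n % 2 = 0 then (PowerSeries.coeff (n / 2) Fgen).comp (Polynomial.X ^ 2)
    else 0


/-!
A tree with at least two leaves is `node x y` for an unordered pair `{x, y}` of subtrees, so the
ordered pairs `(x, y)` with `|x| + |y| = n` hit every tree of size `n` twice, except the trees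
with a symmetrical root (`x = y`), which they hit once. Counting the diagonal pairs twice and
accounting for the extra symmetrical root gives, for `n ≥ 2`,
`[zⁿ] F² + (2u - 1) [zⁿ] F(z², u²) = 2 [zⁿ] F`, since `F(z², u²)` is exactly the generating
function of the diagonal pairs. Together with `F = z + O(z²)` this is
`(1 - F)² = 1 - 2z - (2u - 1) F(z², u²)`.
-/

namespace BT

def toBinaryTree : BT → BinaryTree Unit
  | leaf => .nil
  | node l r => .node () l.toBinaryTree r.toBinaryTree

theorem toBinaryTree_injective : Function.Injective toBinaryTree := by
  intro s t h
  induction s generalizing t with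
  | leaf => cases t <;> simp_all [toBinaryTree]
  | node l r ihl ihr =>
    cases t with
    | leaf => simp [toBinaryTree] at h
    | node l' r' =>
      simp only [toBinaryTree, BinaryTree.node.injEq, true_and] at h
      rw [ihl h.1, ihr h.2]

theorem numLeaves_toBinaryTree (t : BT) : t.toBinaryTree.numLeaves = leavesBT t := by
  induction t with
  | leaf => rfl
  | node l r ihl ihr => simp [toBinaryTree, BinaryTree.numLeaves, leavesBT, ihl, ihr]

end BT

theorem leavesBT_pos (t : BT) : 0 < leavesBT t :=
  t.numLeaves_toBinaryTree ▸ BinaryTree.numLeaves_pos _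

theorem finite_setOf_leavesBT_eq (n : ℕ) : {t : BT | leavesBT t = n}.Finite := by
  refine ((BinaryTree.treesOfNumNodesEq (n - 1)).finite_toSet.preimage
    BT.toBinaryTree_injective.injOn).subset fun t (ht : leavesBT t = n) => ?_
  have := t.toBinaryTree.numLeaves_eq_numNodes_succ
  rw [BT.numLeaves_toBinaryTree] at this
  simp only [Set.mem_preimage, Finset.mem_coe, BinaryTree.mem_treesOfNumNodesEq]
  omega

namespace Otter

def leaf : Otter := ⟦BT.leaf⟧

def node : Otter → Otter → Otter :=
  Quotient.map₂ BT.node fun _ _ h₁ _ _ h₂ => Iso.node h₁ h₂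

theorem node_comm (x y : Otter) : node x y = node y x :=
  Quotient.inductionOn₂ x y fun a b => Quotient.sound (Iso.swap (Iso.rfl a) (Iso.rfl b))

theorem node_eq_node_iff {a b c d : Otter} :
    node a b = node c d ↔ a = c ∧ b = d ∨ a = d ∧ b = c := by
  refine ⟨fun h => ?_, ?_⟩
  · induction a, b using Quotient.inductionOn₂
    induction c, d using Quotient.inductionOn₂
    cases Quotient.exact h with
    | node h₁ h₂ => exact .inl ⟨Quotient.sound h₁, Quotient.sound h₂⟩
    | swap h₁ h₂ => exact .inr ⟨Quotient.sound h₁, Quotient.sound h₂⟩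
  · rintro (⟨rfl, rfl⟩ | ⟨rfl, rfl⟩)
    · rfl
    · exact node_comm a b

theorem leaves_node (x y : Otter) : (node x y).leaves = x.leaves + y.leaves :=
  Quotient.inductionOn₂ x y fun _ _ => rfl

theorem sym_node (x y : Otter) :
    (node x y).sym = x.sym + y.sym + if x = y then 1 else 0 :=
  Quotient.inductionOn₂ x y fun a b =>
    congrArg (symBT a + symBT b + ·) (if_congr (Quotient.eq (r := btSetoid)).symm rfl rfl)

theorem leaves_pos (x : Otter) : 0 < x.leaves :=
  Quotient.inductionOn x leavesBT_pos

theorem leaves_leaf : leaf.leaves = 1 := rfl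

theorem sym_leaf : leaf.sym = 0 := rfl

theorem eq_leaf_or_exists_eq_node (x : Otter) : x = leaf ∨ ∃ y z, x = node y z := by
  induction x using Quotient.inductionOn with | _ t =>
  cases t with
  | leaf => exact .inl rfl
  | node l r => exact .inr ⟨⟦l⟧, ⟦r⟧, rfl⟩

theorem eq_leaf_of_leaves_eq_one {x : Otter} (h : x.leaves = 1) : x = leaf := by
  obtain rfl | ⟨y, z, rfl⟩ := x.eq_leaf_or_exists_eq_node
  · rfl
  · have := y.leaves_pos; have := z.leaves_pos
    rw [leaves_node] at h; omega

theorem exists_eq_node_of_two_le_leaves {x : Otter} (h : 2 ≤ x.leaves) :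
    ∃ y z, x = node y z := by
  obtain rfl | hx := x.eq_leaf_or_exists_eq_node
  · simp [leaves_leaf] at h
  · exact hx

end Otter

instance (n : ℕ) : Finite (OtterN n) := by
  have := (finite_setOf_leavesBT_eq n).to_subtype
  refine Finite.of_surjective (fun t : {t : BT | leavesBT t = n} => (⟨⟦t.1⟧, t.2⟩ : OtterN n)) ?_
  rintro ⟨x, hx⟩
  induction x using Quotient.inductionOn with | _ t => exact ⟨⟨t, hx⟩, rfl⟩

noncomputable instance (n : ℕ) : Fintype (OtterN n) := .ofFinite _

theorem OtterN.ext_iff {n : ℕ} {s t : OtterN n} : s = t ↔ s.1 = t.1 := Subtype.ext_iff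

instance : Unique (OtterN 1) :=
  ⟨⟨⟨Otter.leaf, rfl⟩⟩, fun t => OtterN.ext_iff.mpr (Otter.eq_leaf_of_leaves_eq_one t.2)⟩

def OtterPair (n : ℕ) : Type := {p : Otter × Otter // p.1.leaves + p.2.leaves = n}

open Finset.HasAntidiagonal in
def OtterPair.equivSigma (n : ℕ) :
    OtterPair n ≃ Σ ij : antidiagonal n, OtterN ij.1.1 × OtterN ij.1.2 where
  toFun p := ⟨⟨(p.1.1.leaves, p.1.2.leaves), mem_antidiagonal.mpr p.2⟩, ⟨p.1.1, rfl⟩, ⟨p.1.2, rfl⟩⟩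
  invFun s := ⟨(s.2.1.1, s.2.2.1), by
    rw [s.2.1.2, s.2.2.2]; exact mem_antidiagonal.mp s.1.2⟩
  left_inv _ := rfl
  right_inv := by
    rintro ⟨⟨⟨i, j⟩, h⟩, ⟨x, hx⟩, ⟨y, hy⟩⟩
    dsimp only at hx hy
    subst hx hy
    rfl

noncomputable instance (n : ℕ) : Fintype (OtterPair n) :=
  .ofEquiv _ (OtterPair.equivSigma n).symm

namespace OtterPair

variable {n : ℕ}

def node (p : OtterPair n) : OtterN n := ⟨p.1.1.node p.1.2, (Otter.leaves_node _ _).trans p.2⟩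

def swap (p : OtterPair n) : OtterPair n := ⟨p.1.swap, (add_comm _ _).trans p.2⟩

theorem isEmpty_of_lt_two (hn : n < 2) : IsEmpty (OtterPair n) :=
  ⟨fun p => by have := p.1.1.leaves_pos; have := p.1.2.leaves_pos; have := p.2; omega⟩

theorem val_node (p : OtterPair n) : p.node.1 = p.1.1.node p.1.2 := rfl

theorem val_swap (p : OtterPair n) : p.swap.1 = p.1.swap := rfl

theorem ext_iff {p q : OtterPair n} : p = q ↔ p.1 = q.1 := Subtype.ext_iff

theorem node_eq_node_iff {p q : OtterPair n} : q.node = p.node ↔ q = p ∨ q = p.swap := by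
  rw [OtterN.ext_iff, ext_iff, ext_iff, val_node, val_node, val_swap, Otter.node_eq_node_iff,
    Prod.ext_iff, Prod.ext_iff, Prod.fst_swap, Prod.snd_swap]

theorem filter_node_eq (p : OtterPair n) :
    Finset.univ.filter (·.node = p.node) = {p, p.swap} := by
  ext q
  simp only [Finset.mem_filter, Finset.mem_univ, true_and, Finset.mem_insert,
    Finset.mem_singleton, node_eq_node_iff]

theorem node_swap (p : OtterPair n) : p.swap.node = p.node :=
  Subtype.ext (Otter.node_comm _ _)

theorem surjective_node (hn : 2 ≤ n) : Function.Surjective (node : OtterPair n → OtterN n) := by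
  rintro ⟨t, ht⟩
  obtain ⟨x, y, rfl⟩ := Otter.exists_eq_node_of_two_le_leaves (ht ▸ hn)
  exact ⟨⟨(x, y), (Otter.leaves_node x y).symm.trans ht⟩, rfl⟩

/-- A tree `x.node y` arises from the two ordered pairs `(x, y)` and `(y, x)`, which coincide
exactly when the root is symmetrical; weighting diagonal pairs twice makes every fibre count 2. -/
theorem sum_ite_smul_node {M : Type*} [AddCommMonoid M] (hn : 2 ≤ n) (f : OtterN n → M) :
    ∑ p : OtterPair n, (if p.1.1 = p.1.2 then 2 else 1) • f p.node = 2 • ∑ t, f t := by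
  rw [← Finset.sum_fiberwise Finset.univ node, Finset.smul_sum]
  refine Finset.sum_congr rfl fun t _ => ?_
  obtain ⟨p, rfl⟩ := surjective_node hn t
  rw [filter_node_eq]
  by_cases hp : p.1.1 = p.1.2
  · have : p.swap = p := Subtype.ext (Prod.ext hp.symm hp)
    simp [this, hp]
  · have hne : p ≠ p.swap := fun h => hp (congrArg (·.1.1) h)
    have hp' : p.swap.1.1 ≠ p.swap.1.2 := Ne.symm hp
    simp [Finset.sum_pair hne, hp, hp', node_swap, two_smul]

theorem sum_ite_fst_eq_snd {M : Type*} [AddCommMonoid M] (f : Otter × Otter → M) :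
    ∑ p : OtterPair n, (if p.1.1 = p.1.2 then f p.1 else 0)
      = if n % 2 = 0 then ∑ t : OtterN (n / 2), f (t.1, t.1) else 0 := by
  split_ifs with hn
  · symm
    refine Fintype.sum_of_injective (κ := OtterPair n)
      (fun t : OtterN (n / 2) => (⟨(t.1, t.1), by rw [t.2]; omega⟩ : OtterPair n))
      (fun s t h => OtterN.ext_iff.mpr (congrArg (fun p : OtterPair n => p.1.1) h)) _ _ ?_
      fun t => (if_pos rfl).symm
    rintro ⟨⟨x, y⟩, hxy⟩ hp
    refine if_neg fun (h : x = y) => hp ?_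
    subst h
    exact ⟨⟨x, by dsimp only at hxy; omega⟩, rfl⟩
  · exact Finset.sum_eq_zero fun p _ => if_neg fun h => hn (by have := p.2; rw [h] at this; omega)

theorem sum_pow_add_mul_sum_ite {R : Type*} [CommRing R] (hn : 2 ≤ n) (u : R) :
    ∑ p : OtterPair n, u ^ (p.1.1.sym + p.1.2.sym)
      + (2 * u - 1) * ∑ p : OtterPair n,
          (if p.1.1 = p.1.2 then u ^ (p.1.1.sym + p.1.2.sym) else 0)
      = 2 * ∑ t : OtterN n, u ^ t.1.sym := by
  rw [← Nat.ofNat_nsmul_eq_mul 2 (∑ t : OtterN n, _), ← sum_ite_smul_node hn, Finset.mul_sum,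
    ← Finset.sum_add_distrib]
  refine Finset.sum_congr rfl fun p _ => ?_
  rw [val_node, Otter.sym_node]
  by_cases h : p.1.1 = p.1.2
  · simp only [h, if_true, two_smul]
    ring
  · simp only [h, if_false, one_smul, add_zero, mul_zero]

end OtterPair

section

open Polynomial

theorem coeff_Fgen (n : ℕ) : PowerSeries.coeff n Fgen = ∑ t : OtterN n, (X : ℚ[X]) ^ t.1.sym := by
  rw [Fgen, PowerSeries.coeff_mk, finsum_eq_sum_of_fintype]

theorem coeff_Fgen_mul_self (n : ℕ) :
    PowerSeries.coeff n (Fgen * Fgen)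
      = ∑ p : OtterPair n, (X : ℚ[X]) ^ (p.1.1.sym + p.1.2.sym) := by
  rw [PowerSeries.coeff_mul, ← Finset.sum_coe_sort, ← (OtterPair.equivSigma n).symm.sum_comp,
    ← Finset.univ_sigma_univ, Finset.sum_sigma]
  refine Finset.sum_congr rfl fun ij _ => ?_
  rw [coeff_Fgen, coeff_Fgen, Finset.sum_mul_sum, ← Finset.univ_product_univ, Finset.sum_product]
  simp only [pow_add]
  rfl

theorem coeff_Fgen2 (n : ℕ) :
    PowerSeries.coeff n Fgen2 = ∑ p : OtterPair n,
      (if p.1.1 = p.1.2 then (X : ℚ[X]) ^ (p.1.1.sym + p.1.2.sym) else 0) := by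
  rw [Fgen2, PowerSeries.coeff_mk,
    OtterPair.sum_ite_fst_eq_snd fun x => (X : ℚ[X]) ^ (x.1.sym + x.2.sym), coeff_Fgen,
    ← coe_compRingHom_apply, map_sum]
  simp only [coe_compRingHom_apply, X_pow_comp, ← pow_mul, two_mul]

theorem coeff_zero_Fgen : PowerSeries.coeff 0 Fgen = 0 := by
  have : IsEmpty (OtterN 0) := ⟨fun t => t.1.leaves_pos.ne' t.2⟩
  rw [coeff_Fgen, Finset.univ_eq_empty, Finset.sum_empty]

theorem coeff_one_Fgen : PowerSeries.coeff 1 Fgen = 1 := by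
  rw [coeff_Fgen, Fintype.sum_unique]
  show (X : ℚ[X]) ^ Otter.leaf.sym = 1
  rw [Otter.sym_leaf, pow_zero]

theorem Fgen_mul_self_add :
    Fgen * Fgen + PowerSeries.C (2 * X - 1 : ℚ[X]) * Fgen2 = 2 * (Fgen - PowerSeries.X) := by
  ext n
  rw [map_add, PowerSeries.coeff_C_mul, ← map_ofNat PowerSeries.C, PowerSeries.coeff_C_mul,
    map_sub, PowerSeries.coeff_X, coeff_Fgen_mul_self, coeff_Fgen2]
  rcases lt_or_ge n 2 with hn | hn
  · have := OtterPair.isEmpty_of_lt_two hn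
    interval_cases n <;> simp [coeff_zero_Fgen, coeff_one_Fgen]
  · rw [OtterPair.sum_pow_add_mul_sum_ite hn, if_neg (by omega), sub_zero, coeff_Fgen]

end

/-- `F(z,u) = 1 − √(1 − 2z − (2u−1) F(z²,u²))`, i.e. `1 − F` is the
formal square root with constant term 1 of `1 − 2z − (2u−1)F(z²,u²)`. -/
theorem F_sqrt_form :
    PowerSeries.constantCoeff Fgen = 0 ∧
    (1 - Fgen) ^ 2 =
      1 - 2 * PowerSeries.X
        - PowerSeries.C (2 * Polynomial.X - 1 : Polynomial ℚ) * Fgen2 := by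
  refine ⟨(PowerSeries.coeff_zero_eq_constantCoeff_apply Fgen).symm.trans coeff_zero_Fgen, ?_⟩
  linear_combination Fgen_mul_self_add
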